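/- Let X, Y be real symmetric n×n matrices with X positive definite, let G = [[X + Y X⁻¹ Y, Y X⁻¹],[X⁻¹ Y, X⁻¹]] and S = [[X^{1/2}, 0],[X^{−1/2} Y, X^{−1/2}]]. Then the Wigner covariance ellipsoid {z ∈ ℝ^{2n} : Gz·z ≤ ℏ} of the generalized coherent state ψ_{X,Y} equals S⁻¹(B^{2n}(√ℏ)), where S⁻¹ = [[X^{−1/2}, 0],[−Y X^{−1/2}, X^{1/2}]] is symplectic; in particular the covariance ellipsoid is a quantum blob. -/

import Mathlib

open Matrix

/-- The positive semidefinite square root of a positive semidefinite matrix (the definition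
`Matrix.PosSemidef.sqrt` of the older Mathlib, since removed). -/
noncomputable def Matrix.PosSemidef.sqrt {n : Type*} [Fintype n] [DecidableEq n]
    {A : Matrix n n ℝ} (hA : A.PosSemidef) : Matrix n n ℝ :=
  hA.1.eigenvectorUnitary.1 * diagonal ((↑) ∘ Real.sqrt ∘ hA.1.eigenvalues) *
    (star hA.1.eigenvectorUnitary : Matrix n n ℝ)

/-- The standard symplectic matrix `J = [[0, I],[−I, 0]]`. -/
def stdJ (n : ℕ) : Matrix (Fin n ⊕ Fin n) (Fin n ⊕ Fin n) ℝ :=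
  fromBlocks 0 1 (-1) 0

/-- A real `2n×2n` matrix is symplectic if `Sᵀ J S = J`. -/
def IsSymplecticMat {n : ℕ} (S : Matrix (Fin n ⊕ Fin n) (Fin n ⊕ Fin n) ℝ) : Prop :=
  Sᵀ * stdJ n * S = stdJ n

/-- The closed Euclidean ball of radius `R` centered at `0` in `ℝ^{2n}`. -/
def euclBall (n : ℕ) (R : ℝ) : Set (Fin n ⊕ Fin n → ℝ) :=
  {z | ∑ i, (z i) ^ 2 ≤ R ^ 2}

/-! The covariance matrix factors as `G = SᵀS`, so `Gz·z = |Sz|²` and the ellipsoid `{Gz·z ≤ ℏ}`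
is the preimage of the ball `B(√ℏ)` under `S`, i.e. its image under `S⁻¹`. The block lower
triangular matrix `S⁻¹ = [[A, 0],[C, D]]` is symplectic because `AᵀD = I` and `AᵀC` is symmetric. -/

namespace Matrix.PosSemidef

variable {n : Type*} [Fintype n] [DecidableEq n] {A : Matrix n n ℝ}

theorem sqrt_mul_self (hA : A.PosSemidef) : hA.sqrt * hA.sqrt = A := by
  have hU : (star hA.1.eigenvectorUnitary : Matrix n n ℝ) * hA.1.eigenvectorUnitary.1 = 1 :=
    Unitary.coe_star_mul_self _
  have hspec := hA.1.spectral_theorem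
  rw [Unitary.conjStarAlgAut_apply] at hspec
  conv_rhs => rw [hspec]
  simp only [sqrt, Matrix.mul_assoc]
  rw [← Matrix.mul_assoc _ hA.1.eigenvectorUnitary.1, hU, Matrix.one_mul,
    ← Matrix.mul_assoc (diagonal _), diagonal_mul_diagonal]
  congr 3
  funext i
  simp [Real.mul_self_sqrt (hA.eigenvalues_nonneg i)]

theorem transpose_sqrt (hA : A.PosSemidef) : hA.sqrtᵀ = hA.sqrt := by
  simp only [sqrt, transpose_mul, diagonal_transpose, star_eq_conjTranspose,
    conjTranspose_eq_transpose_of_trivial, transpose_transpose, Matrix.mul_assoc]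

end Matrix.PosSemidef

theorem Matrix.PosDef.isUnit_sqrt {n : Type*} [Fintype n] [DecidableEq n] {A : Matrix n n ℝ}
    (hA : A.PosDef) : IsUnit hA.posSemidef.sqrt :=
  isUnit_of_mul_isUnit_left (hA.posSemidef.sqrt_mul_self ▸ hA.isUnit)

namespace Matrix

variable {n α : Type*} [Fintype n] [DecidableEq n] [CommRing α]

theorem fromBlocks_mul_fromBlocks_inv_eq_one {R : Matrix n n α} (hR : IsUnit R) (Y : Matrix n n α) :
    fromBlocks R 0 (R⁻¹ * Y) R⁻¹ * fromBlocks R⁻¹ 0 (-(Y * R⁻¹)) R = 1 := by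
  have hR' := (isUnit_iff_isUnit_det R).mp hR
  rw [fromBlocks_multiply, ← fromBlocks_one]
  congr 1 <;> simp [Matrix.mul_assoc, mul_nonsing_inv R hR', nonsing_inv_mul R hR']

theorem fromBlocks_transpose_mul_self {R X Y : Matrix n n α} (hRX : R * R = X) (hR : Rᵀ = R)
    (hY : Yᵀ = Y) :
    (fromBlocks R 0 (R⁻¹ * Y) R⁻¹)ᵀ * fromBlocks R 0 (R⁻¹ * Y) R⁻¹ =
      fromBlocks (X + Y * X⁻¹ * Y) (Y * X⁻¹) (X⁻¹ * Y) X⁻¹ := by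
  have hXinv : X⁻¹ = R⁻¹ * R⁻¹ := by rw [← hRX, mul_inv_rev]
  rw [fromBlocks_transpose, fromBlocks_multiply, transpose_mul, transpose_nonsing_inv, hR, hY,
    transpose_zero, hXinv, hRX]
  congr 1 <;> simp [Matrix.mul_assoc]

end Matrix

theorem isSymplecticMat_fromBlocks_zero₁₂ {n : ℕ} {A C D : Matrix (Fin n) (Fin n) ℝ}
    (hAC : Aᵀ * C = Cᵀ * A) (hAD : Aᵀ * D = 1) : IsSymplecticMat (fromBlocks A 0 C D) := by
  have hDA : Dᵀ * A = 1 := by rw [← transpose_transpose A, ← transpose_mul, hAD, transpose_one]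
  rw [IsSymplecticMat, stdJ, fromBlocks_transpose, fromBlocks_multiply, fromBlocks_multiply]
  congr 1 <;> simp [hAC, hAD, hDA]

theorem dotProduct_transpose_mul_mulVec {m α : Type*} [Fintype m] [CommRing α]
    (S : Matrix m m α) (z : m → α) : z ⬝ᵥ (Sᵀ * S) *ᵥ z = S *ᵥ z ⬝ᵥ S *ᵥ z := by
  rw [← mulVec_mulVec, dotProduct_transpose_mulVec]

theorem euclBall_eq_setOf_dotProduct_self (n : ℕ) (R : ℝ) :
    euclBall n R = {w | w ⬝ᵥ w ≤ R ^ 2} := by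
  simp [euclBall, dotProduct, sq]

theorem mulVec_image_euclBall {n : ℕ} {S T : Matrix (Fin n ⊕ Fin n) (Fin n ⊕ Fin n) ℝ}
    (hST : S * T = 1) (R : ℝ) :
    (T *ᵥ ·) '' euclBall n R = {z | z ⬝ᵥ (Sᵀ * S) *ᵥ z ≤ R ^ 2} := by
  have hTS : T * S = 1 := mul_eq_one_comm.mp hST
  rw [Set.image_eq_preimage_of_inverse (g := (S *ᵥ ·)), euclBall_eq_setOf_dotProduct_self]
  · simp only [Set.preimage_ofPred_eq, dotProduct_transpose_mul_mulVec]
  · intro z; simp [mulVec_mulVec, hST]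
  · intro z; simp [mulVec_mulVec, hTS]

theorem covariance_ellipsoid_is_quantum_blob_general
    (n : ℕ) (ℏ : ℝ) (hℏ : 0 < ℏ)
    (X Y : Matrix (Fin n) (Fin n) ℝ)
    (hY : Y.IsSymm) (hXpd : X.PosDef) :
    (fromBlocks hXpd.posSemidef.sqrt 0
        (hXpd.posSemidef.sqrt⁻¹ * Y) hXpd.posSemidef.sqrt⁻¹)⁻¹ =
        fromBlocks hXpd.posSemidef.sqrt⁻¹ 0
          (-(Y * hXpd.posSemidef.sqrt⁻¹)) hXpd.posSemidef.sqrt ∧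
      IsSymplecticMat
        (fromBlocks hXpd.posSemidef.sqrt⁻¹ 0
          (-(Y * hXpd.posSemidef.sqrt⁻¹)) hXpd.posSemidef.sqrt) ∧
      {z : Fin n ⊕ Fin n → ℝ |
          z ⬝ᵥ (fromBlocks (X + Y * X⁻¹ * Y) (Y * X⁻¹) (X⁻¹ * Y) X⁻¹).mulVec z ≤ ℏ} =
        (fun z => (fromBlocks hXpd.posSemidef.sqrt⁻¹ 0
          (-(Y * hXpd.posSemidef.sqrt⁻¹)) hXpd.posSemidef.sqrt).mulVec z) ''
            euclBall n (Real.sqrt ℏ) := by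
  set R := hXpd.posSemidef.sqrt
  have hR : IsUnit R := hXpd.isUnit_sqrt
  have hRt : Rᵀ = R := hXpd.posSemidef.transpose_sqrt
  have hST := fromBlocks_mul_fromBlocks_inv_eq_one hR Y
  refine ⟨inv_eq_right_inv hST, isSymplecticMat_fromBlocks_zero₁₂ ?_ ?_, ?_⟩
  · simp [transpose_nonsing_inv, hRt, hY.eq, Matrix.mul_assoc]
  · rw [transpose_nonsing_inv, hRt, nonsing_inv_mul R ((isUnit_iff_isUnit_det R).mp hR)]
  · rw [mulVec_image_euclBall hST, Real.sq_sqrt hℏ.le,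
      fromBlocks_transpose_mul_self hXpd.posSemidef.sqrt_mul_self hRt hY.eq]

/-- The Wigner covariance ellipsoid `{z : Gz·z ≤ ℏ}` of `ψ_{X,Y}`, with
`G = [[X + YX⁻¹Y, YX⁻¹],[X⁻¹Y, X⁻¹]]` and `S = [[X^{1/2}, 0],[X^{−1/2}Y, X^{−1/2}]]`, equals
`S⁻¹(B^{2n}(√ℏ))` where `S⁻¹ = [[X^{−1/2}, 0],[−YX^{−1/2}, X^{1/2}]]` is symplectic; in
particular the covariance ellipsoid is a quantum blob. -/
theorem covariance_ellipsoid_is_quantum_blob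
    (n : ℕ) (hn : 1 ≤ n) (ℏ : ℝ) (hℏ : 0 < ℏ)
    (X Y : Matrix (Fin n) (Fin n) ℝ)
    (hX : X.IsSymm) (hY : Y.IsSymm) (hXpd : X.PosDef) :
    (fromBlocks hXpd.posSemidef.sqrt 0
        (hXpd.posSemidef.sqrt⁻¹ * Y) hXpd.posSemidef.sqrt⁻¹)⁻¹ =
        fromBlocks hXpd.posSemidef.sqrt⁻¹ 0
          (-(Y * hXpd.posSemidef.sqrt⁻¹)) hXpd.posSemidef.sqrt ∧
      IsSymplecticMat
        (fromBlocks hXpd.posSemidef.sqrt⁻¹ 0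
          (-(Y * hXpd.posSemidef.sqrt⁻¹)) hXpd.posSemidef.sqrt) ∧
      {z : Fin n ⊕ Fin n → ℝ |
          z ⬝ᵥ (fromBlocks (X + Y * X⁻¹ * Y) (Y * X⁻¹) (X⁻¹ * Y) X⁻¹).mulVec z ≤ ℏ} =
        (fun z => (fromBlocks hXpd.posSemidef.sqrt⁻¹ 0
          (-(Y * hXpd.posSemidef.sqrt⁻¹)) hXpd.posSemidef.sqrt).mulVec z) ''
            euclBall n (Real.sqrt ℏ) :=
  covariance_ellipsoid_is_quantum_blob_general n ℏ hℏ X Y hY hXpd
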